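/- For every natural number n, a(n) − b(n) = 1 − 2·t(n); in particular |a(n) − b(n)| = 1. -/
import Mathlib

/-- Sum of base-`d` digits of `n`. -/
def sdig (d n : ℕ) : ℕ := (Nat.digits d n).sum

/-- `t_d(n)`: base-`d` digit sum of `n`, reduced mod `d`. -/
def td (d n : ℕ) : ℕ := sdig d n % d

/-- `a_{j,d}(n)`: n-th natural (0-indexed, increasing) with base-`d` digit sum ≡ j mod d. -/
noncomputable def agen (d j n : ℕ) : ℕ := Nat.nth (fun k => sdig d k % d = j) n

/-- n-th odious number (binary digit sum odd), 0-indexed increasing. -/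
noncomputable def odious (n : ℕ) : ℕ := Nat.nth (fun k => (Nat.digits 2 k).sum % 2 = 1) n

/-- n-th evil number (binary digit sum even), 0-indexed increasing. -/
noncomputable def evil (n : ℕ) : ℕ := Nat.nth (fun k => (Nat.digits 2 k).sum % 2 = 0) n

/-- Thue–Morse sequence: parity of the binary digit sum. -/
def tm (n : ℕ) : ℕ := (Nat.digits 2 n).sum % 2

lemma tm_lt (n : ℕ) : tm n < 2 := Nat.mod_lt _ (by norm_num)

lemma tm_two_mul (k : ℕ) : tm (2 * k) = tm k := by
  rcases Nat.eq_zero_or_pos k with rfl | hk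
  · rfl
  · unfold tm
    rw [Nat.digits_def' (by norm_num : 1 < 2) (by omega)]
    simp [Nat.mul_div_cancel_left _ (by norm_num : 0 < 2), Nat.mul_mod_right]

lemma tm_two_mul_add_one (k : ℕ) : tm (2 * k + 1) = (tm k + 1) % 2 := by
  unfold tm
  rw [Nat.digits_def' (by norm_num : 1 < 2) (by omega)]
  have h1 : (2 * k + 1) % 2 = 1 := by omega
  have h2 : (2 * k + 1) / 2 = k := by omega
  rw [h1, h2]
  simp [Nat.add_mod, Nat.add_comm]

lemma count_both (k : ℕ) :
    Nat.count (fun k => (Nat.digits 2 k).sum % 2 = 0) (2 * k) = k ∧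
    Nat.count (fun k => (Nat.digits 2 k).sum % 2 = 1) (2 * k) = k := by
  induction k with
  | zero => simp
  | succ k ih =>
    have h2 : 2 * (k + 1) = (2 * k + 1) + 1 := by ring
    have ht0 : (Nat.digits 2 (2 * k)).sum % 2 = tm k := tm_two_mul k
    have ht1 : (Nat.digits 2 (2 * k + 1)).sum % 2 = (tm k + 1) % 2 := tm_two_mul_add_one k
    have hlt := tm_lt k
    rw [h2, Nat.count_succ, Nat.count_succ, Nat.count_succ, Nat.count_succ]
    rw [ht0, ht1]
    rcases (by omega : tm k = 0 ∨ tm k = 1) with h | h <;>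
      rw [h] <;> norm_num [ih.1, ih.2]

theorem stmt15 (n : ℕ) :
    (odious n : ℤ) - evil n = 1 - 2 * tm n := by
  have hlt := tm_lt n
  have ht0 : (Nat.digits 2 (2 * n)).sum % 2 = tm n := tm_two_mul n
  have ht1 : (Nat.digits 2 (2 * n + 1)).sum % 2 = (tm n + 1) % 2 := tm_two_mul_add_one n
  rcases (by omega : tm n = 0 ∨ tm n = 1) with h | h
  · have he : evil n = 2 * n := by
      have hp : (Nat.digits 2 (2 * n)).sum % 2 = 0 := by rw [ht0, h]
      have := Nat.nth_count (p := fun k => (Nat.digits 2 k).sum % 2 = 0) hp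
      rw [(count_both n).1] at this
      exact this
    have ho : odious n = 2 * n + 1 := by
      have hp : (Nat.digits 2 (2 * n + 1)).sum % 2 = 1 := by rw [ht1, h]
      have hc : Nat.count (fun k => (Nat.digits 2 k).sum % 2 = 1) (2 * n + 1) = n := by
        rw [Nat.count_succ, (count_both n).2]
        simp [ht0, h]
      have := Nat.nth_count (p := fun k => (Nat.digits 2 k).sum % 2 = 1) hp
      rw [hc] at this
      exact this
    rw [he, ho, h]
    push_cast
    ring
  · have ho : odious n = 2 * n := by
      have hp : (Nat.digits 2 (2 * n)).sum % 2 = 1 := by rw [ht0, h]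
      have := Nat.nth_count (p := fun k => (Nat.digits 2 k).sum % 2 = 1) hp
      rw [(count_both n).2] at this
      exact this
    have he : evil n = 2 * n + 1 := by
      have hp : (Nat.digits 2 (2 * n + 1)).sum % 2 = 0 := by rw [ht1, h]
      have hc : Nat.count (fun k => (Nat.digits 2 k).sum % 2 = 0) (2 * n + 1) = n := by
        rw [Nat.count_succ, (count_both n).1]
        simp [ht0, h]
      have := Nat.nth_count (p := fun k => (Nat.digits 2 k).sum % 2 = 0) hp
      rw [hc] at this
      exact this
    rw [he, ho, h]
    push_cast
    ring
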